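/- For every positive odd integer n, the function f has a critical point c_n in the open interval (n, n + 3/(π²n)), i.e., there exists c with n < c < n + 3/(π²n) and f'(c) = 0. -/

import Mathlib

/-!
For odd `n` the phase `π n` contributes only a sign, so `f' n = 3/2`. At `n + s` with
`s = 3/(π² n)` the phase shift is `t = π s = 3/(π n) ≤ 1`, and the coefficient of `sin t` is
`π((n + s)/2 + 1/4) ≥ 3/(2t) + t/2`; with `sin t > t - t³/6` this term exceeds `3/2 ≥ 1 + cos t / 2`,
so `f'` changes sign on `[n, n + s]` and the intermediate value theorem gives the critical point.
-/

noncomputable def f (x : ℝ) : ℝ := x + 1/4 - (x/2 + 1/4) * Real.cos (Real.pi * x)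

open Real

noncomputable def f' (x : ℝ) : ℝ :=
  1 - cos (π * x) / 2 + π * (x / 2 + 1 / 4) * sin (π * x)

theorem hasDerivAt_f (x : ℝ) : HasDerivAt f (f' x) x := by
  have hcos : HasDerivAt (fun y => cos (π * y)) (-sin (π * x) * π) x :=
    (hasDerivAt_cos (π * x)).comp x (by simpa using (hasDerivAt_id x).const_mul π)
  have hlin : HasDerivAt (fun y : ℝ => y / 2 + 1 / 4) (1 / 2) x := by
    simpa using ((hasDerivAt_id x).div_const 2).add_const (1 / 4 : ℝ)
  refine (((hasDerivAt_id x).add_const (1 / 4 : ℝ)).sub (hlin.mul hcos)).congr_deriv ?_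
  simp only [f']
  ring

theorem deriv_f : deriv f = f' := funext fun x => (hasDerivAt_f x).deriv

theorem continuous_f' : Continuous f' := by
  unfold f'
  fun_prop

theorem f'_odd_add {n : ℕ} (ho : Odd n) (s : ℝ) :
    f' (n + s) = 1 + cos (π * s) / 2 - π * ((n + s) / 2 + 1 / 4) * sin (π * s) := by
  have hshift : π * (n + s) = π * s + n * π := by ring
  simp only [f', hshift, cos_add_nat_mul_pi, sin_add_nat_mul_pi, ho.neg_one_pow]
  ring

theorem f'_odd {n : ℕ} (ho : Odd n) : f' n = 3 / 2 := by
  have := f'_odd_add ho 0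
  norm_num at this
  linarith

theorem three_halves_lt_mul_sin {t : ℝ} (ht : 0 < t) (ht3 : t ^ 2 ≤ 3) :
    3 / 2 < (3 / (2 * t) + t / 2) * sin t := by
  have hcoef : 0 < 3 / (2 * t) + t / 2 := by positivity
  have hpoly : (3 / (2 * t) + t / 2) * (t - t ^ 3 / 6) = 3 / 2 + t ^ 2 * (3 - t ^ 2) / 12 := by
    field_simp
    ring
  calc 3 / 2 ≤ (3 / (2 * t) + t / 2) * (t - t ^ 3 / 6) := by
        rw [hpoly]
        have : 0 ≤ t ^ 2 * (3 - t ^ 2) := mul_nonneg (sq_nonneg t) (by linarith)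
        linarith
    _ < (3 / (2 * t) + t / 2) * sin t := mul_lt_mul_of_pos_left (sin_gt_sub_cube ht) hcoef

theorem f'_odd_add_neg {n : ℕ} (ho : Odd n) : f' (n + 3 / (π ^ 2 * n)) < 0 := by
  have hn : (0 : ℝ) < n := by exact_mod_cast ho.pos
  set t := 3 / (π * n) with ht
  have htpos : 0 < t := by positivity
  have ht1 : t ≤ 1 := by
    rw [ht, div_le_one (by positivity)]
    nlinarith [pi_gt_three, (by exact_mod_cast ho.pos : (1 : ℝ) ≤ n)]
  have hs : π * (3 / (π ^ 2 * n)) = t := by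
    rw [ht]
    field_simp
  have hcoef : π * ((n + 3 / (π ^ 2 * n)) / 2 + 1 / 4) = 3 / (2 * t) + t / 2 + π / 4 := by
    rw [ht]
    field_simp
  have hkey := three_halves_lt_mul_sin htpos (by nlinarith)
  have hsin : 0 < sin t := sin_pos_of_pos_of_lt_pi htpos (by linarith [pi_gt_three])
  rw [f'_odd_add ho, hs, hcoef]
  nlinarith [cos_le_one t, pi_pos]

theorem stmt_4_general (n : ℕ) (ho : Odd n) :
    ∃ c : ℝ, (n : ℝ) < c ∧ c < (n : ℝ) + 3 / (Real.pi ^ 2 * n) ∧ deriv f c = 0 := by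
  have hn : (0 : ℝ) < n := by exact_mod_cast ho.pos
  have hδ : (0 : ℝ) < 3 / (π ^ 2 * n) := by positivity
  obtain ⟨c, hc, hc0⟩ := intermediate_value_Ioo' (by linarith) continuous_f'.continuousOn
    (show (0 : ℝ) ∈ Set.Ioo (f' (n + 3 / (π ^ 2 * n))) (f' n) by
      rw [f'_odd ho]
      exact ⟨f'_odd_add_neg ho, by norm_num⟩)
  exact ⟨c, hc.1, hc.2, by rw [deriv_f, hc0]⟩

theorem stmt_4 (n : ℕ) (hn : 0 < n) (ho : Odd n) :
    ∃ c : ℝ, (n : ℝ) < c ∧ c < (n : ℝ) + 3 / (Real.pi ^ 2 * n) ∧ deriv f c = 0 :=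
  stmt_4_general n ho
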